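/- arXiv:1808.05510 — 2 statements merged into one kernel-verified Lean document; each statement's English description precedes it below -/
import Mathlib

section
/- Assume Ω has all entries in {0,1}, L_x and L_y are symmetric, and λ ≥ 0. A real n_Y×n_X matrix W is a global minimizer of J(W) = (1/2)‖Ω ∘ (W X − Y)‖_F² + (λ/2)‖L_y W + W L_x‖_F² if and only if 𝒜(W) = D, where D = (Ω ∘ Y) Xᵀ. -/
open Matrix

/-- Squared Frobenius norm: `‖M‖_F² = trace (Mᵀ M)`. -/
noncomputable def frobSq {m n : ℕ} (M : Matrix (Fin m) (Fin n) ℝ) : ℝ :=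
  Matrix.trace (Mᵀ * M)

/-- The operator `𝒜(W) = λ(W L_x² + 2 L_y W L_x + L_y² W) + Σ_α diag(Ω_α) W X_α X_αᵀ`. -/
noncomputable def opA {nY nX ninj : ℕ} (lam : ℝ)
    (Lx : Matrix (Fin nX) (Fin nX) ℝ) (Ly : Matrix (Fin nY) (Fin nY) ℝ)
    (X : Matrix (Fin nX) (Fin ninj) ℝ) (Om : Matrix (Fin nY) (Fin ninj) ℝ)
    (W : Matrix (Fin nY) (Fin nX) ℝ) : Matrix (Fin nY) (Fin nX) ℝ :=
  lam • (W * Lx ^ 2 + (2 : ℝ) • (Ly * W * Lx) + Ly ^ 2 * W) +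
    ∑ α : Fin ninj,
      Matrix.diagonal (fun i => Om i α) * W *
        Matrix.vecMulVec (fun k => X k α) (fun k => X k α)

/-- The objective `J(W) = (1/2)‖Ω ∘ (W X − Y)‖_F² + (λ/2)‖L_y W + W L_x‖_F²`. -/
noncomputable def Jobj {nY nX ninj : ℕ} (lam : ℝ)
    (Lx : Matrix (Fin nX) (Fin nX) ℝ) (Ly : Matrix (Fin nY) (Fin nY) ℝ)
    (X : Matrix (Fin nX) (Fin ninj) ℝ) (Y Om : Matrix (Fin nY) (Fin ninj) ℝ)
    (W : Matrix (Fin nY) (Fin nX) ℝ) : ℝ :=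
  (1 / 2) * frobSq (Om ⊙ (W * X - Y)) + (lam / 2) * frobSq (Ly * W + W * Lx)


/-! With `⟪A, B⟫ = trace (Aᵀ * B)`, the objective is quadratic:
`J (W + V) = J W + ⟪𝒜 W - D, V⟫ + Q V` with `Q V = ½‖Ω ∘ (V X)‖² + (λ/2)‖L_y V + V L_x‖² ≥ 0`;
identifying the linear term uses `Ω ∘ Ω = Ω` and the symmetry of `L_x`, `L_y`.
Since `Q (t • V) = t² Q V`, a nonzero linear term makes `J` decrease along a short segment,
so `W` is a minimizer iff `𝒜 W - D` is orthogonal to everything, i.e. vanishes. -/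

theorem forall_le_iff_of_quadratic_expansion {E : Type*} [AddCommGroup E] [Module ℝ E]
    {f ℓ q : E → ℝ} {w : E} (hf : ∀ v, f (w + v) = f w + ℓ v + q v)
    (hℓ : ∀ (t : ℝ) v, ℓ (t • v) = t * ℓ v) (hq : ∀ (t : ℝ) v, q (t • v) = t ^ 2 * q v)
    (hq_nonneg : ∀ v, 0 ≤ q v) :
    (∀ w', f w ≤ f w') ↔ ∀ v, ℓ v = 0 := by
  refine ⟨fun hmin v => ?_, fun hℓ0 w' => ?_⟩
  · have hline : ∀ t : ℝ, 0 ≤ q v * (t * t) + ℓ v * t + 0 := fun t => by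
      have := hmin (w + t • v)
      rw [hf, hℓ, hq] at this
      linarith
    have := discrim_le_zero hline
    simp only [discrim, mul_zero, sub_zero] at this
    exact pow_eq_zero_iff two_ne_zero |>.mp (le_antisymm this (sq_nonneg _))
  · have := hf (w' - w)
    rw [add_sub_cancel, hℓ0] at this
    linarith [hq_nonneg (w' - w)]

namespace Matrix

variable {m n k R : Type*}

theorem hadamard_sub [NonUnitalNonAssocRing R] (A B C : Matrix m n R) :
    A ⊙ (B - C) = A ⊙ B - A ⊙ C :=
  ext fun _ _ => mul_sub _ _ _

theorem hadamard_hadamard_self_of_zero_or_one [MulZeroOneClass R] {P : Matrix m n R}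
    (hP : ∀ i j, P i j = 0 ∨ P i j = 1) (A : Matrix m n R) : P ⊙ (P ⊙ A) = P ⊙ A := by
  ext i j
  rcases hP i j with h | h <;> simp [h]

variable [Fintype m] [Fintype n] [Fintype k]

theorem trace_transpose_mul_comm [CommSemiring R] (A B : Matrix m n R) :
    trace (Aᵀ * B) = trace (Bᵀ * A) := by
  rw [← trace_transpose, transpose_mul, transpose_transpose]

theorem trace_transpose_mul_add [CommSemiring R] (A B C : Matrix m n R) :
    trace (Aᵀ * (B + C)) = trace (Aᵀ * B) + trace (Aᵀ * C) := by
  rw [Matrix.mul_add, trace_add]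

theorem trace_transpose_mul_hadamard [CommSemiring R] (A B C : Matrix m n R) :
    trace (Aᵀ * (B ⊙ C)) = trace ((B ⊙ A)ᵀ * C) := by
  simp only [trace, diag, mul_apply, transpose_apply, hadamard_apply]
  exact Finset.sum_congr rfl fun _ _ => Finset.sum_congr rfl fun _ _ => by ring

theorem trace_transpose_mul_mul_right [CommSemiring R] (A : Matrix m n R) (V : Matrix m k R)
    (X : Matrix k n R) : trace (Aᵀ * (V * X)) = trace ((A * Xᵀ)ᵀ * V) := by
  rw [← Matrix.mul_assoc, trace_mul_comm, transpose_mul, transpose_transpose, Matrix.mul_assoc]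

theorem trace_transpose_mul_mul_left [CommSemiring R] (A : Matrix m n R) (L : Matrix m k R)
    (V : Matrix k n R) : trace (Aᵀ * (L * V)) = trace ((Lᵀ * A)ᵀ * V) := by
  rw [transpose_mul, transpose_transpose, Matrix.mul_assoc]

theorem forall_trace_transpose_mul_eq_zero_iff {G : Matrix m n ℝ} :
    (∀ V : Matrix m n ℝ, trace (Gᵀ * V) = 0) ↔ G = 0 := by
  refine ⟨fun h => ?_, fun hG V => by simp [hG]⟩
  rw [← trace_conjTranspose_mul_self_eq_zero_iff, conjTranspose_eq_transpose_of_trivial]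
  exact h G

theorem sum_diagonal_mul_mul_vecMulVec [CommSemiring R] [DecidableEq m]
    (P : Matrix m k R) (W : Matrix m n R) (X Z : Matrix n k R) :
    ∑ α, diagonal (fun i => P i α) * W * vecMulVec (fun j => X j α) (fun j => Z j α) =
      (P ⊙ (W * X)) * Zᵀ := by
  ext i j
  simp only [sum_apply, mul_apply, diagonal_apply, ite_mul, zero_mul, Finset.sum_ite_eq,
    Finset.mem_univ, if_true, vecMulVec_apply, hadamard_apply, transpose_apply, Finset.sum_mul,
    Finset.mul_sum]
  exact Finset.sum_congr rfl fun _ _ => Finset.sum_congr rfl fun _ _ => by ring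

end Matrix

section Frobenius

variable {m n : ℕ}

theorem frobSq_add (A B : Matrix (Fin m) (Fin n) ℝ) :
    frobSq (A + B) = frobSq A + 2 * trace (Aᵀ * B) + frobSq B := by
  simp only [frobSq, transpose_add, Matrix.add_mul, Matrix.mul_add, trace_add,
    trace_transpose_mul_comm B A]
  ring

theorem frobSq_smul (t : ℝ) (A : Matrix (Fin m) (Fin n) ℝ) :
    frobSq (t • A) = t ^ 2 * frobSq A := by
  simp only [frobSq, transpose_smul, Matrix.smul_mul, Matrix.mul_smul, trace_smul, smul_eq_mul]
  ring

theorem frobSq_nonneg (A : Matrix (Fin m) (Fin n) ℝ) : 0 ≤ frobSq A := by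
  rw [frobSq, ← conjTranspose_eq_transpose_of_trivial]
  exact (posSemidef_conjTranspose_mul_self A).trace_nonneg

end Frobenius

section Objective

variable {nY nX ninj : ℕ} (lam : ℝ) (Lx : Matrix (Fin nX) (Fin nX) ℝ)
  (Ly : Matrix (Fin nY) (Fin nY) ℝ) (X : Matrix (Fin nX) (Fin ninj) ℝ)
  (Y Om : Matrix (Fin nY) (Fin ninj) ℝ)

theorem opA_sub_eq (W : Matrix (Fin nY) (Fin nX) ℝ) :
    opA lam Lx Ly X Om W - (Om ⊙ Y) * Xᵀ =
      (Om ⊙ (W * X - Y)) * Xᵀ + lam • (Ly * (Ly * W + W * Lx) + (Ly * W + W * Lx) * Lx) := by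
  have hpoly : W * Lx ^ 2 + (2 : ℝ) • (Ly * W * Lx) + Ly ^ 2 * W =
      Ly * (Ly * W + W * Lx) + (Ly * W + W * Lx) * Lx := by
    simp only [Matrix.mul_add, Matrix.add_mul, sq, two_smul, Matrix.mul_assoc]
    abel
  rw [opA, sum_diagonal_mul_mul_vecMulVec, hadamard_sub, Matrix.sub_mul, hpoly]
  abel

variable {Lx Ly Om}

theorem trace_opA_sub_transpose_mul (hLx : Lxᵀ = Lx) (hLy : Lyᵀ = Ly)
    (hOm : ∀ i j, Om i j = 0 ∨ Om i j = 1) (W V : Matrix (Fin nY) (Fin nX) ℝ) :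
    trace ((opA lam Lx Ly X Om W - (Om ⊙ Y) * Xᵀ)ᵀ * V) =
      trace ((Om ⊙ (W * X - Y))ᵀ * (Om ⊙ (V * X))) +
        lam * trace ((Ly * W + W * Lx)ᵀ * (Ly * V + V * Lx)) := by
  rw [trace_transpose_mul_hadamard, hadamard_hadamard_self_of_zero_or_one hOm,
    trace_transpose_mul_mul_right, trace_transpose_mul_add, trace_transpose_mul_mul_left,
    trace_transpose_mul_mul_right, hLx, hLy, opA_sub_eq]
  simp only [transpose_add, transpose_smul, Matrix.add_mul, Matrix.smul_mul, trace_add,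
    trace_smul, smul_eq_mul]

theorem Jobj_add (hLx : Lxᵀ = Lx) (hLy : Lyᵀ = Ly)
    (hOm : ∀ i j, Om i j = 0 ∨ Om i j = 1) (W V : Matrix (Fin nY) (Fin nX) ℝ) :
    Jobj lam Lx Ly X Y Om (W + V) =
      Jobj lam Lx Ly X Y Om W + trace ((opA lam Lx Ly X Om W - (Om ⊙ Y) * Xᵀ)ᵀ * V) +
        ((1 / 2) * frobSq (Om ⊙ (V * X)) + (lam / 2) * frobSq (Ly * V + V * Lx)) := by
  have hfit : Om ⊙ ((W + V) * X - Y) = Om ⊙ (W * X - Y) + Om ⊙ (V * X) := by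
    rw [← hadamard_add, Matrix.add_mul, add_sub_right_comm]
  have hreg : Ly * (W + V) + (W + V) * Lx = (Ly * W + W * Lx) + (Ly * V + V * Lx) := by
    rw [Matrix.mul_add, Matrix.add_mul]
    abel
  rw [Jobj, Jobj, hfit, hreg, frobSq_add, frobSq_add,
    trace_opA_sub_transpose_mul lam X Y hLx hLy hOm]
  ring

end Objective

/-- `W` is a global minimizer of `J` iff `𝒜(W) = D` where `D = (Ω ∘ Y) Xᵀ`. -/
theorem minimizer_iff_normal_equations {nY nX ninj : ℕ} (lam : ℝ) (hlam : 0 ≤ lam)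
    (Lx : Matrix (Fin nX) (Fin nX) ℝ) (hLx : Lxᵀ = Lx)
    (Ly : Matrix (Fin nY) (Fin nY) ℝ) (hLy : Lyᵀ = Ly)
    (X : Matrix (Fin nX) (Fin ninj) ℝ) (Y Om : Matrix (Fin nY) (Fin ninj) ℝ)
    (hOm : ∀ i j, Om i j = 0 ∨ Om i j = 1)
    (W : Matrix (Fin nY) (Fin nX) ℝ) :
    (∀ W' : Matrix (Fin nY) (Fin nX) ℝ,
        Jobj lam Lx Ly X Y Om W ≤ Jobj lam Lx Ly X Y Om W') ↔
      opA lam Lx Ly X Om W = (Om ⊙ Y) * Xᵀ := by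
  rw [forall_le_iff_of_quadratic_expansion (Jobj_add lam X Y hLx hLy hOm W) (fun t V => ?_)
      (fun t V => ?_) (fun V => ?_), forall_trace_transpose_mul_eq_zero_iff, sub_eq_zero]
  · rw [Matrix.mul_smul, trace_smul, smul_eq_mul]
  · rw [Matrix.smul_mul, hadamard_smul, Matrix.mul_smul, Matrix.smul_mul, ← smul_add,
      frobSq_smul, frobSq_smul]
    ring
  · have := frobSq_nonneg (Om ⊙ (V * X))
    have := frobSq_nonneg (Ly * V + V * Lx)
    positivity
end

section
/- Let v be a real n_X-vector with ‖v‖₂ = 1 and u any real n_Y-vector. Then trace((u vᵀ)ᵀ 𝒜(u vᵀ)) = uᵀ Â u, where Â is the n_Y×n_Y matrix Â = λ((vᵀ L_x² v) I_{n_Y} + 2 (vᵀ L_x v) L_y + L_y²) + Σ_{α=1}^{n_inj} (vᵀ X_α X_αᵀ v) diag(Ω_α). -/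
/-!
Against a rank-one matrix `W = u vᵀ` every term of `𝒜(W)` has the form `A W B`, and
`uᵀ (A u vᵀ B) v = (uᵀ A u) (vᵀ B v)`. Reading the trace as `uᵀ 𝒜(W) v` therefore splits it
into quadratic forms in `u` weighted by quadratic forms in `v`; `vᵀ v = 1` absorbs the factor
coming from the `L_y² W` term.
-/

open Matrix

theorem Matrix.trace_transpose_vecMulVec_mul {m n R : Type*} [Fintype m] [Fintype n]
    [CommSemiring R] (u : m → R) (v : n → R) (M : Matrix m n R) :
    trace ((vecMulVec u v)ᵀ * M) = u ⬝ᵥ M *ᵥ v := by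
  rw [transpose_vecMulVec, vecMulVec_mul, trace_vecMulVec, dotProduct_comm, dotProduct_mulVec]

theorem EuclideanSpace.dotProduct_self_eq_norm_sq {n : Type*} [Fintype n] (v : n → ℝ) :
    v ⬝ᵥ v = ‖(EuclideanSpace.equiv n ℝ).symm v‖ ^ 2 := by
  rw [← real_inner_self_eq_norm_sq, EuclideanSpace.inner_eq_star_dotProduct]
  rfl

/-- For `‖v‖₂ = 1`, `trace((u vᵀ)ᵀ 𝒜(u vᵀ)) = uᵀ Â u` where
`Â = λ((vᵀL_x²v) I + 2(vᵀL_x v) L_y + L_y²) + Σ_α (vᵀX_αX_αᵀv) diag(Ω_α)`. -/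
theorem rank_one_quadratic_form_u {nY nX ninj : ℕ} (lam : ℝ)
    (Lx : Matrix (Fin nX) (Fin nX) ℝ) (Ly : Matrix (Fin nY) (Fin nY) ℝ)
    (X : Matrix (Fin nX) (Fin ninj) ℝ) (Om : Matrix (Fin nY) (Fin ninj) ℝ)
    (v : Fin nX → ℝ) (hv : ‖(EuclideanSpace.equiv (Fin nX) ℝ).symm v‖ = 1)
    (u : Fin nY → ℝ) :
    Matrix.trace ((Matrix.vecMulVec u v)ᵀ *
        opA lam Lx Ly X Om (Matrix.vecMulVec u v)) =
      u ⬝ᵥ (lam • ((v ⬝ᵥ (Lx ^ 2).mulVec v) • (1 : Matrix (Fin nY) (Fin nY) ℝ) +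
            (2 * (v ⬝ᵥ Lx.mulVec v)) • Ly + Ly ^ 2) +
          ∑ α : Fin ninj,
            (v ⬝ᵥ (Matrix.vecMulVec (fun k => X k α) (fun k => X k α)).mulVec v) •
              Matrix.diagonal (fun i => Om i α)).mulVec u := by
  have hvv : v ⬝ᵥ v = 1 := by
    rw [EuclideanSpace.dotProduct_self_eq_norm_sq, hv, one_pow]
  rw [trace_transpose_vecMulVec_mul]
  simp only [opA, add_mulVec, smul_mulVec, sum_mulVec, ← mulVec_mulVec, vecMulVec_mulVec,
    op_smul_eq_smul, one_mulVec, hvv, one_smul, mulVec_smul, dotProduct_add, dotProduct_smul,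
    dotProduct_sum, smul_eq_mul, smul_smul]
end
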